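/- arXiv:1111.7095 — 3 statements merged into one kernel-verified Lean document; each statement's English description precedes it below -/
import Mathlib

section
/- Let R = ℤ[x₁,…,x_N, x₁⁻¹,…,x_N⁻¹, t, t⁻¹] and let k₁,…,k_N be natural numbers. Define V = ∑_{α=1}^N x_α ∑_{i=1}^{k_α} t^{1-i}, V* = ∑_{β=1}^N x_β⁻¹ ∑_{i=1}^{k_β} t^{i-1}, W = ∑_{α=1}^N x_α, W* = ∑_{β=1}^N x_β⁻¹. Then V*·V·(t−1) + W*·V = ∑_{α=1}^N ∑_{β=1}^N x_α x_β⁻¹ ∑_{i=1}^{k_α} t^{k_β+1−i}. -/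
/-!
By the geometric series, `V* (t - 1) + W*` telescopes to `∑_β x_β⁻¹ t^{k_β}`; multiplying by `V`
and expanding the product gives the right-hand side.
-/

open Finset

/-- The monomial `x^v t^m` in the Laurent polynomial ring
`ℤ[x₁^{±1},…,x_N^{±1}, t^{±1}]`, realized as the group algebra of `(Fin N →₀ ℤ) × ℤ`. -/
noncomputable def mono (N : ℕ) (v : Fin N →₀ ℤ) (m : ℤ) :
    AddMonoidAlgebra ℤ ((Fin N →₀ ℤ) × ℤ) :=
  AddMonoidAlgebra.single (v, m) 1

theorem mul_geom_sum_mul_sub_one_add {R : Type*} [Ring R] (a q : R) (n : ℕ) :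
    (∑ j ∈ range n, a * q ^ j) * (q - 1) + a = a * q ^ n := by
  rw [← mul_sum, mul_assoc, geom_sum_mul]
  noncomm_ring

section mono

variable {N : ℕ}

theorem mono_mul (v w : Fin N →₀ ℤ) (m n : ℤ) :
    mono N v m * mono N w n = mono N (v + w) (m + n) := by
  simp [mono, AddMonoidAlgebra.single_mul_single]

theorem mono_natCast_eq_mul_pow (v : Fin N →₀ ℤ) (j : ℕ) :
    mono N v j = mono N v 0 * mono N 0 1 ^ j := by
  simp [mono, AddMonoidAlgebra.single_pow, AddMonoidAlgebra.single_mul_single]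

theorem sum_sum_range_mono_mul_sub_one_add {ι : Type*} (s : Finset ι) (v : ι → Fin N →₀ ℤ)
    (k : ι → ℕ) :
    (∑ β ∈ s, ∑ j ∈ range (k β), mono N (v β) j) * (mono N 0 1 - 1) + ∑ β ∈ s, mono N (v β) 0 =
      ∑ β ∈ s, mono N (v β) (k β) := by
  rw [sum_mul, ← sum_add_distrib]
  refine sum_congr rfl fun β _ => ?_
  simp only [mono_natCast_eq_mul_pow]
  exact mul_geom_sum_mul_sub_one_add _ _ _

end mono

/-- Nonabelian vortex character identity:
`V* · V · (t − 1) + W* · V = ∑_{α,β} x_α x_β⁻¹ ∑_{i=1}^{k_α} t^{k_β + 1 − i}`, where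
`V = ∑_α x_α ∑_{i=1}^{k_α} t^{1-i}`, `V* = ∑_β x_β⁻¹ ∑_{i=1}^{k_β} t^{i-1}`,
`W = ∑_α x_α`, `W* = ∑_β x_β⁻¹`. -/
theorem nonabelian_vortex_character_identity (N : ℕ) (k : Fin N → ℕ) :
    (∑ β : Fin N, ∑ i ∈ Finset.range (k β), mono N (Finsupp.single β (-1)) (i : ℤ)) *
        (∑ α : Fin N, ∑ i ∈ Finset.range (k α), mono N (Finsupp.single α 1) (-(i : ℤ))) *
        (mono N 0 1 - 1) +
      (∑ β : Fin N, mono N (Finsupp.single β (-1)) 0) *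
        (∑ α : Fin N, ∑ i ∈ Finset.range (k α), mono N (Finsupp.single α 1) (-(i : ℤ))) =
    ∑ α : Fin N, ∑ β : Fin N, ∑ i ∈ Finset.range (k α),
      mono N (Finsupp.single α 1 + Finsupp.single β (-1)) ((k β : ℤ) - (i : ℤ)) := by
  set V := ∑ α : Fin N, ∑ i ∈ Finset.range (k α), mono N (Finsupp.single α 1) (-(i : ℤ))
  calc _ = ((∑ β : Fin N, ∑ i ∈ range (k β), mono N (Finsupp.single β (-1)) (i : ℤ)) *
          (mono N 0 1 - 1) + ∑ β : Fin N, mono N (Finsupp.single β (-1)) 0) * V := by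
        ring
    _ = (∑ β : Fin N, mono N (Finsupp.single β (-1)) (k β)) * V := by
        rw [sum_sum_range_mono_mul_sub_one_add]
    _ = _ := by
        rw [sum_mul, sum_comm]
        refine sum_congr rfl fun β _ => ?_
        simp only [V, mul_sum, mono_mul, add_comm (Finsupp.single β (-1 : ℤ)), sub_eq_add_neg]
end

section
/- Let λ and μ be two distinct partitions (Young diagrams). Then there exists a cell s ∈ λ with a_λ(s) + l_μ(s) + 1 = 0, or a cell t ∈ μ with a_μ(t) + l_λ(t) + 1 = 0. Here for a cell s = (i,j) (row i, column j), a_λ(s) = λ_i − j is the arm length with respect to λ and l_μ(s) = μ'_j − i is the leg length with respect to μ (where μ' is the conjugate partition); these quantities may be negative when s ∉ μ or s ∉ λ. -/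
open Finset

/-- The conjugate partition: `conj μ j` is the number of rows `i` (0-indexed) with
`μ i > j`, i.e. the length of the `j`-th column of `μ`. -/
noncomputable def conj (μ : ℕ → ℕ) (j : ℕ) : ℕ := Nat.card {i : ℕ // j < μ i}

/-!
Let `i` be the first row in which `λ` and `μ` differ, say `μ i < λ i`, and take the last cell
`(i, λ i - 1)` of that row of `λ`. Its arm in `λ` is `0`. The column `λ i - 1` of `μ` has length
exactly `i`: the rows above `i` agree with `λ` and are at least `λ i` long, while the rows from `i`
on are at most `μ i < λ i` long. So its leg in `μ` is `-1`, and the hook `0 + (-1) + 1` vanishes.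
-/

lemma conj_eq_of_forall_lt_iff {μ : ℕ → ℕ} {i j : ℕ} (h : ∀ r, j < μ r ↔ r < i) :
    conj μ j = i := by
  rw [conj, Nat.card_congr ((Equiv.subtypeEquivRight h).trans Fin.equivSubtype.symm),
    Nat.card_fin]

lemma conj_pred_eq_of_eqOn_of_lt {lam mu : ℕ → ℕ} (hlam : Antitone lam) (hmu : Antitone mu)
    {i : ℕ} (heq : ∀ r < i, lam r = mu r) (hlt : mu i < lam i) :
    conj mu (lam i - 1) = i := by
  refine conj_eq_of_forall_lt_iff fun r => ⟨fun h => ?_, fun h => ?_⟩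
  · by_contra! hir
    have := hmu hir
    omega
  · have := hlam h.le
    have := heq r h
    omega

lemma exists_vanishing_hook_of_eqOn_of_lt {lam mu : ℕ → ℕ} (hlam : Antitone lam)
    (hmu : Antitone mu) {i : ℕ} (heq : ∀ r < i, lam r = mu r) (hlt : mu i < lam i) :
    ∃ i j : ℕ, j < lam i ∧
      ((lam i : ℤ) - j - 1) + ((conj mu j : ℤ) - i - 1) + 1 = 0 := by
  refine ⟨i, lam i - 1, by omega, ?_⟩
  rw [conj_pred_eq_of_eqOn_of_lt hlam hmu heq hlt]
  omega

theorem exists_vanishing_hook_general (lam mu : ℕ → ℕ)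
    (hlam : Antitone lam) (hmu : Antitone mu)
    (hne : lam ≠ mu) :
    (∃ i j : ℕ, j < lam i ∧
        ((lam i : ℤ) - j - 1) + ((conj mu j : ℤ) - i - 1) + 1 = 0) ∨
    (∃ i j : ℕ, j < mu i ∧
        ((mu i : ℤ) - j - 1) + ((conj lam j : ℤ) - i - 1) + 1 = 0) := by
  classical
  have hdiff : ∃ i, lam i ≠ mu i := Function.ne_iff.mp hne
  have heq : ∀ r < Nat.find hdiff, lam r = mu r := fun r hr =>
    not_not.mp (Nat.find_min hdiff hr)
  rcases (Nat.find_spec hdiff).lt_or_gt with hlt | hgt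
  · exact Or.inr
      (exists_vanishing_hook_of_eqOn_of_lt hmu hlam (fun r hr => (heq r hr).symm) hlt)
  · exact Or.inl (exists_vanishing_hook_of_eqOn_of_lt hlam hmu heq hgt)

/-- Combinatorial vanishing lemma: for two distinct partitions `λ ≠ μ` (presented
0-indexed, as antitone eventually-zero sequences of row lengths), there is a cell
`s ∈ λ` with `a_λ(s) + l_μ(s) + 1 = 0` or a cell `t ∈ μ` with `a_μ(t) + l_λ(t) + 1 = 0`,
where for a (0-indexed) cell `(i,j)` the arm is `λ_i − j − 1` and the leg is
`μ'_j − i − 1` (possibly negative). -/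
theorem exists_vanishing_hook (lam mu : ℕ → ℕ)
    (hlam : Antitone lam) (hmu : Antitone mu)
    (hlam0 : ∃ n, lam n = 0) (hmu0 : ∃ n, mu n = 0) (hne : lam ≠ mu) :
    (∃ i j : ℕ, j < lam i ∧
        ((lam i : ℤ) - j - 1) + ((conj mu j : ℤ) - i - 1) + 1 = 0) ∨
    (∃ i j : ℕ, j < mu i ∧
        ((mu i : ℤ) - j - 1) + ((conj lam j : ℤ) - i - 1) + 1 = 0) :=
  exists_vanishing_hook_general lam mu hlam hmu hne
end

section
/- Let F be a field of characteristic zero, m, h, z formal parameters with h invertible, and define for μ ∈ F the formal power series (1−z²)^{−μ} := ∑_{l≥0} (μ)_l z^{2l}/l!, where (μ)_l = μ(μ+1)⋯(μ+l−1). Then in F[[z]]: ∑_{k≥0} z^k · (∏_{i=1}^{⌈k/2⌉}(m + 2h(i−1))) / ((2h)^{⌊k/2⌋}·⌊k/2⌋!) = (1−z²)^{−m/(2h)} + m·z·(1−z²)^{−m/(2h)−1}. -/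
/-!
With `μ = m / (2h)` one has `∏_{i<l} (m + 2h i) = (2h)^l (μ)_l`. Hence the coefficient of `z^{2l}`
on the left is `(μ)_l / l!`, and that of `z^{2l+1}` is `(2h)^{l+1} (μ)_{l+1} / ((2h)^l l!)`, which
equals `m (μ+1)_l / l!` because `(μ)_{l+1} = μ (μ+1)_l`.
-/

open Finset PowerSeries

/-- The formal power series `(1−z²)^{−μ} = ∑_{l≥0} (μ)_l z^{2l}/l!`, where
`(μ)_l` is the ascending Pochhammer symbol. -/
noncomputable def negBinomSq (F : Type*) [Field F] (μ : F) : PowerSeries F :=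
  PowerSeries.mk fun n =>
    if 2 ∣ n then ((ascPochhammer F (n / 2)).eval μ) / (Nat.factorial (n / 2) : F) else 0

open scoped Nat

theorem ascPochhammer_eval_eq_prod_range {R : Type*} [CommSemiring R] (n : ℕ) (r : R) :
    (ascPochhammer R n).eval r = ∏ i ∈ range n, (r + i) := by
  induction n with
  | zero => simp
  | succ n ih => rw [ascPochhammer_succ_eval, ih, prod_range_succ]

theorem ascPochhammer_succ_eval_left {R : Type*} [CommSemiring R] (n : ℕ) (r : R) :
    (ascPochhammer R (n + 1)).eval r = r * (ascPochhammer R n).eval (r + 1) := by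
  simp only [ascPochhammer_succ_left, Polynomial.eval_mul, Polynomial.eval_X, Polynomial.eval_comp,
    Polynomial.eval_add, Polynomial.eval_one]

theorem prod_range_add_mul_eq_pow_mul_ascPochhammer_eval {K : Type*} [Semifield K]
    (a : K) {b : K} (hb : b ≠ 0) (n : ℕ) :
    ∏ i ∈ range n, (a + b * i) = b ^ n * (ascPochhammer K n).eval (a / b) := by
  calc ∏ i ∈ range n, (a + b * i) = ∏ i ∈ range n, b * (a / b + i) :=
        prod_congr rfl fun i _ => by field_simp
    _ = _ := by rw [prod_mul_distrib, prod_const, card_range, ascPochhammer_eval_eq_prod_range]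

section negBinomSq

variable {F : Type*} [Field F]

theorem coeff_two_mul_negBinomSq (μ : F) (l : ℕ) :
    coeff (2 * l) (negBinomSq F μ) = (ascPochhammer F l).eval μ / l ! := by
  simp [negBinomSq]

theorem coeff_two_mul_add_one_negBinomSq (μ : F) (l : ℕ) :
    coeff (2 * l + 1) (negBinomSq F μ) = 0 := by
  simp [negBinomSq]

theorem coeff_two_mul_X_mul_negBinomSq (μ : F) (l : ℕ) :
    coeff (2 * l) (X * negBinomSq F μ) = 0 := by
  cases l with
  | zero => exact coeff_zero_X_mul _
  | succ l => rw [mul_add_one, coeff_succ_X_mul, coeff_two_mul_add_one_negBinomSq]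

end negBinomSq

/-- The abelian vortex partition function on ℂ/ℤ₂ (sector `q_α − q_f = 0`):
`∑_{k≥0} z^k ∏_{i=1}^{⌈k/2⌉}(m+2h(i−1)) / ((2h)^{⌊k/2⌋} ⌊k/2⌋!)
  = (1−z²)^{−m/(2h)} + m z (1−z²)^{−m/(2h)−1}`. -/
theorem abelian_orbifold_vortex (F : Type*) [Field F] [CharZero F] (m h : F) (hh : h ≠ 0) :
    (PowerSeries.mk fun k =>
        (∏ i ∈ Finset.range ((k + 1) / 2), (m + 2 * h * (i : F))) /
          ((2 * h) ^ (k / 2) * (Nat.factorial (k / 2) : F))) =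
      negBinomSq F (m / (2 * h)) +
        PowerSeries.C m * PowerSeries.X * negBinomSq F (m / (2 * h) + 1) := by
  have h2h : (2 * h : F) ≠ 0 := mul_ne_zero two_ne_zero hh
  ext n
  rw [coeff_mk, map_add, mul_assoc, coeff_C_mul]
  obtain ⟨l, rfl | rfl⟩ := n.even_or_odd'
  · rw [coeff_two_mul_negBinomSq, coeff_two_mul_X_mul_negBinomSq, mul_zero, add_zero,
      show (2 * l + 1) / 2 = l by omega, show 2 * l / 2 = l by omega,
      prod_range_add_mul_eq_pow_mul_ascPochhammer_eval m h2h]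
    field_simp
  · rw [coeff_two_mul_add_one_negBinomSq, coeff_succ_X_mul, coeff_two_mul_negBinomSq,
      show (2 * l + 1 + 1) / 2 = l + 1 by omega, show (2 * l + 1) / 2 = l by omega,
      prod_range_add_mul_eq_pow_mul_ascPochhammer_eval m h2h, ascPochhammer_succ_eval_left]
    field_simp
    ring
end
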